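/- arXiv:2109.04570 — 2 statements merged into one kernel-verified Lean document; each statement's English description precedes it below -/
import Mathlib

section
/- For a real random variable c with finite support, the CVaR value function q ↦ R^CV_q(c) = E[c | c ≥ min{d : P(c ≤ d) ≥ q}] is monotone nondecreasing in q ∈ [0,1], with R^CV_0(c) = E[c] and R^CV_1(c) equal to the maximum outcome of c. -/
/-- Value at Risk at level q of a finite discrete random variable with outcomes `c`
and probabilities `p`: the smallest outcome d with P(c ≤ d) ≥ q. -/
noncomputable def discVaR (M : ℕ) (c p : Fin M → ℝ) (q : ℝ) : ℝ :=
  sInf {d : ℝ | (∃ i, d = c i) ∧ q ≤ ∑ j, if c j ≤ d then p j else 0}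

/-- CVaR at level q: the conditional expectation of c given c ≥ VaR_q. -/
noncomputable def discCVaR (M : ℕ) (c p : Fin M → ℝ) (q : ℝ) : ℝ :=
  (∑ i, if discVaR M c p q ≤ c i then c i * p i else 0) /
    (∑ i, if discVaR M c p q ≤ c i then p i else 0)

private lemma discVaR_setFinite (M : ℕ) (c p : Fin M → ℝ) (q : ℝ) :
    {d : ℝ | (∃ i, d = c i) ∧ q ≤ ∑ j, if c j ≤ d then p j else 0}.Finite := by
  apply Set.Finite.subset (Set.finite_range c)
  rintro d ⟨⟨i, rfl⟩, -⟩
  exact ⟨i, rfl⟩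

private lemma discVaR_setNonempty (M : ℕ) (hM : 0 < M) (c p : Fin M → ℝ)
    (hsum : ∑ i, p i = 1) (q : ℝ) (hq : q ≤ 1) :
    {d : ℝ | (∃ i, d = c i) ∧ q ≤ ∑ j, if c j ≤ d then p j else 0}.Nonempty := by
  obtain ⟨i, -, hi⟩ := Finset.exists_max_image Finset.univ c ⟨⟨0, hM⟩, Finset.mem_univ _⟩
  refine ⟨c i, ⟨i, rfl⟩, ?_⟩
  have h : (∑ j, if c j ≤ c i then p j else 0) = ∑ j, p j := by
    apply Finset.sum_congr rfl
    intro j _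
    rw [if_pos (hi j (Finset.mem_univ j))]
  rw [h, hsum]
  exact hq

private lemma discVaR_mem (M : ℕ) (hM : 0 < M) (c p : Fin M → ℝ)
    (hsum : ∑ i, p i = 1) (q : ℝ) (hq : q ≤ 1) :
    (∃ i, discVaR M c p q = c i) ∧
      q ≤ ∑ j, if c j ≤ discVaR M c p q then p j else 0 :=
  (discVaR_setNonempty M hM c p hsum q hq).csInf_mem (discVaR_setFinite M c p q)

private lemma discVaR_mono (M : ℕ) (hM : 0 < M) (c p : Fin M → ℝ)
    (hsum : ∑ i, p i = 1) (q₁ q₂ : ℝ) (h12 : q₁ ≤ q₂) (h2 : q₂ ≤ 1) :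
    discVaR M c p q₁ ≤ discVaR M c p q₂ := by
  apply csInf_le_csInf (discVaR_setFinite M c p q₁).bddBelow
    (discVaR_setNonempty M hM c p hsum q₂ h2)
  rintro d ⟨hd, hs⟩
  exact ⟨hd, h12.trans hs⟩

private lemma tail_avg_mono (M : ℕ) (c p : Fin M → ℝ) (hp : ∀ i, 0 < p i)
    (a b : ℝ) (hab : a ≤ b) (hb : ∃ i, b ≤ c i) :
    (∑ i, if a ≤ c i then c i * p i else 0) / (∑ i, if a ≤ c i then p i else 0) ≤
    (∑ i, if b ≤ c i then c i * p i else 0) / (∑ i, if b ≤ c i then p i else 0) := by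
  classical
  simp only [← Finset.sum_filter]
  set A := Finset.univ.filter (fun i => a ≤ c i) with hA
  set B := Finset.univ.filter (fun i => b ≤ c i) with hB
  have hBA : B ⊆ A := by
    intro i hi
    simp only [hA, hB, Finset.mem_filter] at *
    exact ⟨hi.1, hab.trans hi.2⟩
  obtain ⟨i0, hi0⟩ := hb
  have hi0B : i0 ∈ B := by simp [hB, hi0]
  have hsB : 0 < ∑ i ∈ B, p i := Finset.sum_pos (fun i _ => hp i) ⟨i0, hi0B⟩
  have hsA : 0 < ∑ i ∈ A, p i := Finset.sum_pos (fun i _ => hp i) ⟨i0, hBA hi0B⟩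
  rw [div_le_div_iff₀ hsA hsB]
  have hsplit : ∀ f : Fin M → ℝ, ∑ i ∈ A, f i = ∑ i ∈ A \ B, f i + ∑ i ∈ B, f i :=
    fun f => (Finset.sum_sdiff hBA).symm
  have h1 : ∑ i ∈ A \ B, c i * p i ≤ b * ∑ i ∈ A \ B, p i := by
    rw [Finset.mul_sum]
    apply Finset.sum_le_sum
    intro i hi
    have hnb : ¬ b ≤ c i := by
      have := (Finset.mem_sdiff.mp hi).2
      simp only [hB, Finset.mem_filter, Finset.mem_univ, true_and] at this
      exact this
    exact mul_le_mul_of_nonneg_right (le_of_not_ge hnb) (hp i).le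
  have h2 : b * ∑ i ∈ B, p i ≤ ∑ i ∈ B, c i * p i := by
    rw [Finset.mul_sum]
    apply Finset.sum_le_sum
    intro i hi
    have hbi : b ≤ c i := (Finset.mem_filter.mp hi).2
    exact mul_le_mul_of_nonneg_right hbi (hp i).le
  have hs' : 0 ≤ ∑ i ∈ A \ B, p i := Finset.sum_nonneg fun i _ => (hp i).le
  rw [hsplit (fun i => c i * p i), hsplit (fun i => p i)]
  nlinarith [hsB, hs', h1, h2]

/-- CVaR is monotone nondecreasing in q ∈ [0,1], equals the mean at q = 0
and equals the maximum outcome at q = 1. -/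
theorem discCVaR_monotone_and_endpoints
    (M : ℕ) (hM : 0 < M) (c p : Fin M → ℝ)
    (hp : ∀ i, 0 < p i) (hsum : ∑ i, p i = 1) :
    (∀ q₁ q₂ : ℝ, 0 ≤ q₁ → q₁ ≤ q₂ → q₂ ≤ 1 →
        discCVaR M c p q₁ ≤ discCVaR M c p q₂) ∧
      discCVaR M c p 0 = ∑ i, c i * p i ∧
      discCVaR M c p 1 = Finset.univ.sup' (Finset.univ_nonempty_iff.mpr ⟨⟨0, hM⟩⟩) c := by
  classical
  refine ⟨?_, ?_, ?_⟩
  · -- monotonicity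
    intro q₁ q₂ hq₁ h12 hq₂
    obtain ⟨⟨i, hi⟩, -⟩ := discVaR_mem M hM c p hsum q₂ hq₂
    exact tail_avg_mono M c p hp _ _ (discVaR_mono M hM c p hsum q₁ q₂ h12 hq₂) ⟨i, hi.le⟩
  · -- q = 0 : mean
    have hle : ∀ i, discVaR M c p 0 ≤ c i := by
      intro i
      apply csInf_le (discVaR_setFinite M c p 0).bddBelow
      refine ⟨⟨i, rfl⟩, Finset.sum_nonneg fun j _ => ?_⟩
      by_cases h : c j ≤ c i <;> simp [h, (hp j).le]
    unfold discCVaR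
    have h1 : (∑ i, if discVaR M c p 0 ≤ c i then c i * p i else 0) = ∑ i, c i * p i :=
      Finset.sum_congr rfl fun i _ => if_pos (hle i)
    have h2 : (∑ i, if discVaR M c p 0 ≤ c i then p i else 0) = ∑ i, p i :=
      Finset.sum_congr rfl fun i _ => if_pos (hle i)
    rw [h1, h2, hsum, div_one]
  · -- q = 1 : maximum
    set m := Finset.univ.sup' (Finset.univ_nonempty_iff.mpr ⟨⟨0, hM⟩⟩) c with hm
    obtain ⟨⟨i, hi⟩, hs⟩ := discVaR_mem M hM c p hsum 1 le_rfl
    have hall : ∀ j, c j ≤ discVaR M c p 1 := by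
      by_contra h
      push_neg at h
      obtain ⟨j, hj⟩ := h
      have hlt : (∑ k, if c k ≤ discVaR M c p 1 then p k else 0) < ∑ k, p k := by
        apply Finset.sum_lt_sum
        · intro k _
          by_cases h : c k ≤ discVaR M c p 1 <;> simp [h, (hp k).le]
        · exact ⟨j, Finset.mem_univ j, by rw [if_neg (not_le.mpr hj)]; exact hp j⟩
      rw [hsum] at hlt
      linarith
    have hVm : discVaR M c p 1 = m := by
      apply le_antisymm
      · rw [hi, hm]
        exact Finset.le_sup' c (Finset.mem_univ i)
      · exact Finset.sup'_le _ _ fun j _ => hall j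
    unfold discCVaR
    rw [hVm]
    have hkey : ∀ i, (if m ≤ c i then c i * p i else 0) = m * (if m ≤ c i then p i else 0) := by
      intro i
      by_cases h : m ≤ c i
      · have : c i = m := le_antisymm (by rw [hVm] at hall; exact hall i) h
        simp [h, this]
      · simp [h]
    have hnum : (∑ i, if m ≤ c i then c i * p i else 0)
        = m * ∑ i, if m ≤ c i then p i else 0 := by
      rw [Finset.mul_sum]
      exact Finset.sum_congr rfl fun i _ => hkey i
    have hden : 0 < ∑ i, if m ≤ c i then p i else 0 := by
      obtain ⟨i0, -, hi0⟩ := Finset.exists_mem_eq_sup' (Finset.univ_nonempty_iff.mpr ⟨⟨0, hM⟩⟩) c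
      apply Finset.sum_pos'
      · intro k _
        by_cases h : m ≤ c k <;> simp [h, (hp k).le]
      · exact ⟨i0, Finset.mem_univ i0, by rw [if_pos (le_of_eq hi0)]; exact hp i0⟩
    rw [hnum, mul_div_assoc, div_self (ne_of_gt hden), mul_one]
end

section
/- Let c be a discrete random variable whose outcomes all strictly exceed 1 and with positive variance. Then there exist CPT parameter choices θ₁, θ₂ such that R^cpt_{θ₁}(c) > R^CV_q(c) for all q ∈ [0,1] and R^cpt_{θ₂}(c) < R^CV_q(c) for all q ∈ [0,1]; i.e., CPT values can strictly dominate and be strictly dominated by all CVaR values simultaneously. -/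
/-!
CVaR is a conditional mean of `c` over a nonempty upper tail, so it lies between the smallest
outcome `m` and the largest outcome `b`. Scaling the mean by `λ = b` gives `b · E[c] > b`,
because `E[c] > 1`; on the other hand `E[c ^ γ] ≤ b ^ γ`, and `b ^ γ < m` once `γ > 0` is small,
since `b ^ γ → 1 < m` as `γ → 0`.
-/

open Finset Filter Topology

section WeightedMean

variable {ι : Type*} {s : Finset ι} {w f : ι → ℝ}

theorem Finset.sum_mul_le_of_forall_le {b : ℝ} (hw : ∀ i ∈ s, 0 ≤ w i) (hsum : ∑ i ∈ s, w i = 1)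
    (hf : ∀ i ∈ s, f i ≤ b) : ∑ i ∈ s, f i * w i ≤ b :=
  calc ∑ i ∈ s, f i * w i ≤ ∑ i ∈ s, b * w i :=
        sum_le_sum fun i hi => mul_le_mul_of_nonneg_right (hf i hi) (hw i hi)
    _ = b := by rw [← mul_sum, hsum, mul_one]

theorem Finset.lt_sum_mul_of_forall_lt {a : ℝ} (hs : s.Nonempty) (hw : ∀ i ∈ s, 0 < w i)
    (hsum : ∑ i ∈ s, w i = 1) (hf : ∀ i ∈ s, a < f i) : a < ∑ i ∈ s, f i * w i :=
  calc a = ∑ i ∈ s, a * w i := by rw [← mul_sum, hsum, mul_one]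
    _ < ∑ i ∈ s, f i * w i :=
        sum_lt_sum_of_nonempty hs fun i hi => mul_lt_mul_of_pos_right (hf i hi) (hw i hi)

end WeightedMean

theorem Real.exists_rpow_lt_of_one_lt {b m : ℝ} (hb : 0 < b) (hm : 1 < m) :
    ∃ γ : ℝ, 0 < γ ∧ γ < 1 ∧ b ^ γ < m := by
  have hlim : Tendsto (fun γ : ℝ => b ^ γ) (𝓝[>] 0) (𝓝 1) := by
    simpa only [Real.rpow_zero] using
      (Real.continuousAt_const_rpow hb.ne' (b := 0)).tendsto.mono_left nhdsWithin_le_nhds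
  obtain ⟨γ, ⟨hγ0, hγ1⟩, hγ⟩ :=
    (Eventually.and (Ioo_mem_nhdsGT one_pos) (hlim.eventually (eventually_lt_nhds hm))).exists
  exact ⟨γ, hγ0, hγ1, hγ⟩

section CVaR

variable {M : ℕ} {c p : Fin M → ℝ} {q : ℝ}

theorem exists_discVaR_eq (hM : 0 < M) (hq : q ≤ ∑ j, p j) : ∃ i, discVaR M c p q = c i := by
  have hne : (univ : Finset (Fin M)).Nonempty := univ_nonempty_iff.mpr (Fin.pos_iff_nonempty.mp hM)
  set S := {d : ℝ | (∃ i, d = c i) ∧ q ≤ ∑ j, if c j ≤ d then p j else 0}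
  have hSfin : S.Finite := (Set.finite_range c).subset fun d ⟨⟨i, hi⟩, _⟩ => ⟨i, hi.symm⟩
  -- the largest outcome belongs to `S`: every outcome lies below it
  have hSne : S.Nonempty := by
    obtain ⟨i, -, hi⟩ := exists_mem_eq_sup' hne c
    refine ⟨c i, ⟨i, rfl⟩, ?_⟩
    simpa only [← hi, le_sup' c (mem_univ _), if_true] using hq
  obtain ⟨⟨i, hi⟩, -⟩ := hSne.csInf_mem hSfin
  exact ⟨i, hi⟩

theorem discCVaR_eq_centerMass :
    discCVaR M c p q = (univ.filter fun i => discVaR M c p q ≤ c i).centerMass p c := by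
  rw [discCVaR, centerMass, sum_filter, sum_filter, smul_eq_mul, inv_mul_eq_div]
  simp only [smul_eq_mul, mul_comm (p _)]

theorem discCVaR_mem_of_convex {K : Set ℝ} (hK : Convex ℝ K) (hM : 0 < M) (hp : ∀ i, 0 < p i)
    (hq : q ≤ ∑ j, p j) (hc : ∀ i, c i ∈ K) : discCVaR M c p q ∈ K := by
  obtain ⟨i₀, hi₀⟩ := exists_discVaR_eq (c := c) hM hq
  have hi₀_mem : i₀ ∈ univ.filter fun i => discVaR M c p q ≤ c i := by simp [hi₀]
  rw [discCVaR_eq_centerMass]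
  exact hK.centerMass_mem (fun i _ => (hp i).le)
    (sum_pos' (fun i _ => (hp i).le) ⟨i₀, hi₀_mem, hp i₀⟩) fun i _ => hc i

end CVaR

theorem cpt_dominates_and_is_dominated_by_cvar_general
    (M : ℕ) (hM : 0 < M) (c p : Fin M → ℝ)
    (hc : ∀ i, 1 < c i) (hp : ∀ i, 0 < p i) (hsum : ∑ i, p i = 1) :
    ∃ l γ : ℝ, 1 ≤ l ∧ 0 < γ ∧ γ < 1 ∧
      (∀ q ∈ Set.Icc (0 : ℝ) 1,
        discCVaR M c p q < ∑ i, l * c i * p i) ∧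
      (∀ q ∈ Set.Icc (0 : ℝ) 1,
        ∑ i, (c i) ^ γ * p i < discCVaR M c p q) := by
  have hne : (univ : Finset (Fin M)).Nonempty := univ_nonempty_iff.mpr (Fin.pos_iff_nonempty.mp hM)
  set b := univ.sup' hne c
  set m := univ.inf' hne c
  have hc_mem (i : Fin M) : c i ∈ Set.Icc m b := ⟨inf'_le c (mem_univ i), le_sup' c (mem_univ i)⟩
  have hm : 1 < m := (lt_inf'_iff hne).mpr fun i _ => hc i
  have hb : 1 < b := hm.trans_le ((hc_mem ⟨0, hM⟩).1.trans (hc_mem ⟨0, hM⟩).2)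
  have hCVaR (q : ℝ) (hq : q ∈ Set.Icc (0 : ℝ) 1) : discCVaR M c p q ∈ Set.Icc m b :=
    discCVaR_mem_of_convex (convex_Icc m b) hM hp (hsum ▸ hq.2) hc_mem
  obtain ⟨γ, hγ0, hγ1, hbγ⟩ := Real.exists_rpow_lt_of_one_lt (zero_lt_one.trans hb) hm
  refine ⟨b, γ, hb.le, hγ0, hγ1, fun q hq => ?_, fun q hq => ?_⟩
  · have hmean : 1 < ∑ i, c i * p i :=
      lt_sum_mul_of_forall_lt hne (fun i _ => hp i) hsum fun i _ => hc i
    calc discCVaR M c p q ≤ b := (hCVaR q hq).2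
      _ < b * ∑ i, c i * p i := lt_mul_right (zero_lt_one.trans hb) hmean
      _ = ∑ i, b * c i * p i := by simp only [mul_sum, mul_assoc]
  · calc ∑ i, c i ^ γ * p i ≤ b ^ γ :=
          sum_mul_le_of_forall_le (fun i _ => (hp i).le) hsum fun i _ =>
            Real.rpow_le_rpow (zero_lt_one.trans (hc i)).le (hc_mem i).2 hγ0.le
      _ < m := hbγ
      _ ≤ discCVaR M c p q := (hCVaR q hq).1

/-- For a discrete random variable whose outcomes all exceed 1 and whose
variance is positive, there are CPT parameter choices (λ > b/c_μ with γ = 1, and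
λ = 1 with 0 < γ < 1) whose CPT values strictly dominate, respectively are strictly
dominated by, every CVaR value R^CV_q, q ∈ [0,1]. -/
theorem cpt_dominates_and_is_dominated_by_cvar
    (M : ℕ) (hM : 0 < M) (c p : Fin M → ℝ)
    (hc : ∀ i, 1 < c i) (hp : ∀ i, 0 < p i) (hsum : ∑ i, p i = 1)
    (hvar : 0 < ∑ i, p i * (c i - ∑ j, c j * p j) ^ 2) :
    ∃ l γ : ℝ, 1 ≤ l ∧ 0 < γ ∧ γ < 1 ∧
      (∀ q ∈ Set.Icc (0 : ℝ) 1,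
        discCVaR M c p q < ∑ i, l * c i * p i) ∧
      (∀ q ∈ Set.Icc (0 : ℝ) 1,
        ∑ i, (c i) ^ γ * p i < discCVaR M c p q) :=
  cpt_dominates_and_is_dominated_by_cvar_general M hM c p hc hp hsum
end
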